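/- (Strong structure theorem, partition form.) Let G be a simple graph on a finite vertex set V with a symmetric edge sign function σ with values in {+1, −1}. Then every cycle of G is positive if and only if V can be partitioned into two (possibly empty) sets such that every edge within the same set is positive and every edge between the two sets is negative. -/

import Mathlib

/-!
If every cycle is positive, then so is every closed walk: a closed walk that is neither a
cycle nor a single edge traversed back and forth splits off a shorter closed walk. Hence all
walks between two vertices have the same sign, and fixing a root in each connected component,
the sign `g v` of any walk from the root to `v` satisfies `σ u v = g u * g v` on every edge; the
partition is `{v | g v = -1}`. Conversely, such a potential makes the sign of a closed walk
telescope to `g u * g u = 1`.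
-/

open SimpleGraph

def walkSign {V : Type*} {G : SimpleGraph V} (σ : V → V → ℤ) {u v : V}
    (w : G.Walk u v) : ℤ :=
  (w.darts.map fun d => σ d.fst d.snd).prod

section WalkSign

variable {V : Type*} {G : SimpleGraph V} (σ : V → V → ℤ)

@[simp]
lemma walkSign_nil {u : V} : walkSign σ (Walk.nil : G.Walk u u) = 1 := rfl

@[simp]
lemma walkSign_cons {u v w : V} (h : G.Adj u v) (p : G.Walk v w) :
    walkSign σ (Walk.cons h p) = σ u v * walkSign σ p := by
  simp [walkSign]

@[simp]
lemma walkSign_append {u v w : V} (p : G.Walk u v) (q : G.Walk v w) :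
    walkSign σ (p.append q) = walkSign σ p * walkSign σ q := by
  simp [walkSign, Walk.darts_append]

@[simp]
lemma walkSign_copy {u v u' v' : V} (p : G.Walk u v) (hu : u = u') (hv : v = v') :
    walkSign σ (p.copy hu hv) = walkSign σ p := by
  subst hu hv
  rfl

lemma walkSign_reverse (hsymm : ∀ u v, G.Adj u v → σ u v = σ v u) {u v : V}
    (p : G.Walk u v) : walkSign σ p.reverse = walkSign σ p := by
  induction p with
  | nil => rfl
  | cons h p ih => simp [Walk.reverse_cons, ih, hsymm _ _ h, mul_comm]

lemma walkSign_eq_one_or_neg_one (hsign : ∀ u v, G.Adj u v → σ u v = 1 ∨ σ u v = -1)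
    {u v : V} (p : G.Walk u v) : walkSign σ p = 1 ∨ walkSign σ p = -1 := by
  induction p with
  | nil => left; rfl
  | cons h p ih =>
    rcases hsign _ _ h with h1 | h1 <;> rcases ih with h2 | h2 <;> simp [h1, h2]

lemma walkSign_eq_mul_of_potential (g : V → ℤ) (hg : ∀ v, g v * g v = 1)
    (hσ : ∀ u v, G.Adj u v → σ u v = g u * g v) {u v : V} (p : G.Walk u v) :
    walkSign σ p = g u * g v := by
  induction p with
  | nil => exact (hg _).symm
  | @cons a b c h p ih =>
    rw [walkSign_cons, ih, hσ _ _ h]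
    linear_combination g a * g c * hg b

end WalkSign

lemma SimpleGraph.Walk.exists_eq_append_append_of_not_isPath {V : Type*} {G : SimpleGraph V}
    {u v : V} {p : G.Walk u v} (hp : ¬p.IsPath) :
    ∃ (x : V) (p₁ : G.Walk u x) (c : G.Walk x x) (p₂ : G.Walk x v),
      ¬c.Nil ∧ p = (p₁.append c).append p₂ := by
  obtain ⟨x, c, ⟨p₁, p₂, rfl⟩, hc⟩ : ∃ (x : V) (c : G.Walk x x), c.IsSubwalk p ∧ ¬c.Nil := by
    simpa [Walk.isPath_iff_isSubwalk_imp_nil] using hp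
  exact ⟨x, p₁, c, p₂, hc, rfl⟩

section Balanced

variable {V : Type*} {G : SimpleGraph V} {σ : V → V → ℤ}

lemma walkSign_eq_one_of_forall_isCycle (hsymm : ∀ u v, G.Adj u v → σ u v = σ v u)
    (hsign : ∀ u v, G.Adj u v → σ u v = 1 ∨ σ u v = -1)
    (hcyc : ∀ (u : V) (c : G.Walk u u), c.IsCycle → walkSign σ c = 1) {u : V}
    (c : G.Walk u u) : walkSign σ c = 1 := by
  induction hn : c.length using Nat.strong_induction_on generalizing u c with
  | _ n ih =>
  cases c with
  | nil => rfl
  | @cons _ v _ h p =>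
    by_cases hp : p.IsPath
    · by_cases he : s(u, v) ∈ p.edges
      · rw [hp.eq_adj_toWalk_of_mem_edges (Sym2.eq_swap ▸ he)]
        rcases hsign _ _ h with h1 | h1 <;> simp [Adj.toWalk, ← hsymm _ _ h, h1]
      · exact hcyc u _ ((Walk.cons_isCycle_iff p h).mpr ⟨hp, he⟩)
    · obtain ⟨x, p₁, c, p₂, hc, rfl⟩ := Walk.exists_eq_append_append_of_not_isPath hp
      have hc_pos : 0 < c.length := Walk.not_nil_iff_lt_length.mp hc
      simp only [Walk.length_cons, Walk.length_append] at hn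
      have hshort := ih _ (by simp only [Walk.length_cons, Walk.length_append]; omega)
        (Walk.cons h (p₁.append p₂)) rfl
      have hloop := ih _ (by omega) c rfl
      simp only [walkSign_cons, walkSign_append] at hshort ⊢
      linear_combination walkSign σ p₁ * walkSign σ p₂ * σ u v * hloop + hshort

lemma walkSign_eq_of_forall_closed (hsymm : ∀ u v, G.Adj u v → σ u v = σ v u)
    (hclosed : ∀ (u : V) (c : G.Walk u u), walkSign σ c = 1) {u v : V} (p q : G.Walk u v) :
    walkSign σ p = walkSign σ q :=
  Int.eq_of_mul_eq_one <| by simpa [walkSign_reverse σ hsymm] using hclosed u (p.append q.reverse)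

lemma exists_potential_of_forall_closed (hsymm : ∀ u v, G.Adj u v → σ u v = σ v u)
    (hsign : ∀ u v, G.Adj u v → σ u v = 1 ∨ σ u v = -1)
    (hclosed : ∀ (u : V) (c : G.Walk u u), walkSign σ c = 1) :
    ∃ g : V → ℤ, (∀ v, g v = 1 ∨ g v = -1) ∧ ∀ u v, G.Adj u v → σ u v = g u * g v := by
  let root (v : V) : V := (G.connectedComponentMk v).out
  have hreach (v : V) : G.Reachable (root v) v := ConnectedComponent.exact (Quot.out_eq _)
  let g (v : V) : ℤ := walkSign σ (hreach v).some
  have hg (v : V) : g v = 1 ∨ g v = -1 := walkSign_eq_one_or_neg_one σ hsign _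
  refine ⟨g, hg, fun u v h => ?_⟩
  have hroot : root u = root v := congrArg Quot.out (ConnectedComponent.sound h.reachable)
  have hstep : g u * σ u v = g v := by
    simpa [Walk.concat_eq_append] using walkSign_eq_of_forall_closed hsymm hclosed
      ((hreach u).some.concat h) ((hreach v).some.copy hroot.symm rfl)
  rw [← hstep]
  rcases hg u with h1 | h1 <;> simp [h1]

end Balanced

lemma exists_partition_iff_exists_potential {V : Type*} (G : SimpleGraph V) (σ : V → V → ℤ) :
    (∃ s : Set V, ∀ u v, G.Adj u v →
        (((u ∈ s ↔ v ∈ s) → σ u v = 1) ∧ (¬(u ∈ s ↔ v ∈ s) → σ u v = -1))) ↔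
      ∃ g : V → ℤ, (∀ v, g v = 1 ∨ g v = -1) ∧ ∀ u v, G.Adj u v → σ u v = g u * g v := by
  classical
  constructor
  · rintro ⟨s, hs⟩
    refine ⟨fun v => if v ∈ s then -1 else 1, fun v => by by_cases hv : v ∈ s <;> simp [hv],
      fun u v h => ?_⟩
    by_cases hu : u ∈ s <;> by_cases hv : v ∈ s <;> simp [hu, hv, hs u v h]
  · rintro ⟨g, hg, hσ⟩
    refine ⟨{v | g v = -1}, fun u v h => ?_⟩
    rw [hσ u v h]
    rcases hg u with hu | hu <;> rcases hg v with hv | hv <;> simp [hu, hv]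

theorem strong_structure_partition_general {V : Type*}
    (G : SimpleGraph V) (σ : V → V → ℤ)
    (hsymm : ∀ u v, G.Adj u v → σ u v = σ v u)
    (hsign : ∀ u v, G.Adj u v → σ u v = 1 ∨ σ u v = -1) :
    (∀ (u : V) (w : G.Walk u u), w.IsCycle → walkSign σ w = 1) ↔
      ∃ s : Set V, ∀ u v, G.Adj u v →
        (((u ∈ s ↔ v ∈ s) → σ u v = 1) ∧ (¬(u ∈ s ↔ v ∈ s) → σ u v = -1)) := by
  rw [exists_partition_iff_exists_potential]
  refine ⟨fun hcyc => exists_potential_of_forall_closed hsymm hsign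
    (fun _ => walkSign_eq_one_of_forall_isCycle hsymm hsign hcyc), ?_⟩
  rintro ⟨g, hg, hσ⟩ u w -
  have hg_sq (v : V) : g v * g v = 1 := by rcases hg v with h | h <;> simp [h]
  rw [walkSign_eq_mul_of_potential σ g hg_sq hσ, hg_sq]

/-- Strong structure theorem (partition form): every cycle of a signed graph is positive
iff the vertex set can be partitioned into two (possibly empty) sets such that every edge
within the same set is positive and every edge between the two sets is negative. -/
theorem strong_structure_partition {V : Type*} [Fintype V]
    (G : SimpleGraph V) (σ : V → V → ℤ)
    (hsymm : ∀ u v, G.Adj u v → σ u v = σ v u)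
    (hsign : ∀ u v, G.Adj u v → σ u v = 1 ∨ σ u v = -1) :
    (∀ (u : V) (w : G.Walk u u), w.IsCycle → walkSign σ w = 1) ↔
      ∃ s : Set V, ∀ u v, G.Adj u v →
        (((u ∈ s ↔ v ∈ s) → σ u v = 1) ∧ (¬(u ∈ s ↔ v ∈ s) → σ u v = -1)) :=
  strong_structure_partition_general G σ hsymm hsign
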